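/- For each positive integer n, every integer solution of the system {xᵢ·xᵢ = x_{i+1} for i ∈ {1,...,n}, x_{n+2}+1 = x₁, x_{n+3}+1 = x_{n+2}, x_{n+3}·x_{n+4} = x_{n+1}} satisfies x₁ ∈ [2 - 2^(2^n), 2 + 2^(2^n)] and x₁ - 2 divides 2^(2^n). -/

import Mathlib

/-!
Squaring `n` times gives `x (n + 1) = x₁ ^ 2 ^ n`, and the last three equations say that
`x₁ - 2` divides it. Since `x₁ - 2` also divides `x₁ ^ 2 ^ n - 2 ^ 2 ^ n`, it divides `2 ^ 2 ^ n`,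
which bounds `|x₁ - 2|` by `2 ^ 2 ^ n`.
-/

theorem eq_pow_two_pow_of_mul_self_eq {R : Type*} [Monoid R] {n : ℕ} {x : ℕ → R}
    (hsq : ∀ i, 1 ≤ i → i ≤ n → x i * x i = x (i + 1)) :
    ∀ k ≤ n, x (k + 1) = x 1 ^ 2 ^ k := by
  intro k hk
  induction k with
  | zero => simp
  | succ k ih =>
    rw [← hsq (k + 1) (by omega) hk, ih (by omega), ← pow_add, pow_succ, mul_two]

theorem sub_dvd_pow_right_of_sub_dvd_pow_left {R : Type*} [CommRing R] {a b : R} (m : ℕ)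
    (h : a - b ∣ a ^ m) : a - b ∣ b ^ m :=
  (dvd_sub_right h).mp (sub_dvd_pow_sub_pow a b m)

theorem stmt_8 : ∀ n : ℕ, 0 < n → ∀ x : ℕ → ℤ,
    (∀ i, 1 ≤ i → i ≤ n → x i * x i = x (i + 1)) →
    x (n + 2) + 1 = x 1 →
    x (n + 3) + 1 = x (n + 2) →
    x (n + 3) * x (n + 4) = x (n + 1) →
    (2 - 2 ^ (2 ^ n) ≤ x 1 ∧ x 1 ≤ 2 + 2 ^ (2 ^ n)) ∧
    (x 1 - 2) ∣ 2 ^ (2 ^ n) := by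
  intro n _ x hsq h2 h3 h4
  have hpow : x (n + 1) = x 1 ^ 2 ^ n := eq_pow_two_pow_of_mul_self_eq hsq n le_rfl
  have hx3 : x (n + 3) = x 1 - 2 := by linarith
  have hdvd : x 1 - 2 ∣ 2 ^ 2 ^ n :=
    sub_dvd_pow_right_of_sub_dvd_pow_left _ ⟨x (n + 4), by rw [← hpow, ← h4, hx3]⟩
  have habs : |x 1 - 2| ≤ 2 ^ 2 ^ n := Int.le_of_dvd (by positivity) ((abs_dvd _ _).mpr hdvd)
  obtain ⟨hlo, hhi⟩ := abs_le.mp habs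
  exact ⟨⟨by linarith, by linarith⟩, hdvd⟩
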